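/- arXiv:1606.04447 — 2 statements merged into one kernel-verified Lean document; each statement's English description precedes it below -/
import Mathlib

section
/- Let G be a finite simple chordal graph. If G is vertex decomposable, then Shed(G) is a dominating set of G. -/
open scoped Classical

variable {V : Type*}

/-- `S` is an independent set of the induced subgraph of `G` on the vertex set `A`. -/
def IsIndepIn (G : SimpleGraph V) (A S : Finset V) : Prop :=
  S ⊆ A ∧ ∀ u ∈ S, ∀ v ∈ S, ¬ G.Adj u v

/-- `S` is a maximal independent set of the induced subgraph of `G` on the vertex set `A`. -/
def IsMaxIndepIn (G : SimpleGraph V) (A S : Finset V) : Prop :=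
  IsIndepIn G A S ∧ ∀ T, IsIndepIn G A T → S ⊆ T → T = S

/-- The induced subgraph of `G` on the vertex set `A` is well-covered: all of its
maximal independent sets have the same cardinality. -/
def WellCoveredOn (G : SimpleGraph V) (A : Finset V) : Prop :=
  ∀ S T, IsMaxIndepIn G A S → IsMaxIndepIn G A T → S.card = T.card

/-- The closed neighbourhood of `x` deleted from `A`: the vertices of `A` distinct from `x`
and not adjacent to `x`. -/
noncomputable def delClosedNbhd (G : SimpleGraph V) (A : Finset V) (x : V) : Finset V :=
  A.filter fun y => y ≠ x ∧ ¬ G.Adj x y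

/-- The induced subgraph of `G` on the vertex set `A` is vertex decomposable: it is
well-covered, and either it has no edges, or some vertex `x ∈ A` is such that deleting `x`,
respectively the closed neighbourhood of `x`, leaves a vertex decomposable graph. -/
def VertexDecomposableOn (G : SimpleGraph V) (A : Finset V) : Prop :=
  WellCoveredOn G A ∧
    ((∀ u ∈ A, ∀ v ∈ A, ¬ G.Adj u v) ∨
      ∃ x, ∃ _h : x ∈ A,
        VertexDecomposableOn G (A.erase x) ∧
        VertexDecomposableOn G (delClosedNbhd G A x))
termination_by A.card
decreasing_by
  · exact Finset.card_erase_lt_of_mem (by assumption)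
  · exact Finset.card_lt_card
      (Finset.filter_ssubset.mpr ⟨x, by assumption, by simp⟩)

/-- A finite simple graph is well-covered if all of its maximal independent sets have the
same cardinality. -/
def WellCovered (G : SimpleGraph V) [Fintype V] : Prop :=
  WellCoveredOn G Finset.univ

/-- A finite simple graph is vertex decomposable. -/
def VertexDecomposable (G : SimpleGraph V) [Fintype V] : Prop :=
  VertexDecomposableOn G Finset.univ

/-- The set of shedding vertices of `G` : those vertices `x` such that both `G \ x` and
`G \ N[x]` are vertex decomposable. -/
def Shed (G : SimpleGraph V) [Fintype V] : Set V :=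
  {x | VertexDecomposableOn G (Finset.univ.erase x) ∧
       VertexDecomposableOn G (delClosedNbhd G Finset.univ x)}

/-- `D` is a dominating set of `G`: every vertex not in `D` is adjacent to a vertex of `D`. -/
def IsDominatingSet (G : SimpleGraph V) (D : Set V) : Prop :=
  ∀ v, v ∉ D → ∃ u ∈ D, G.Adj u v

/-- A vertex is simplicial if its neighbourhood induces a clique. -/
def IsSimplicialVertex (G : SimpleGraph V) (x : V) : Prop :=
  ∀ u v, G.Adj x u → G.Adj x v → u ≠ v → G.Adj u v

/-- A graph is chordal if every induced cycle has length three, i.e. there is no induced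
cycle with four or more vertices. -/
def IsChordalGraph {W : Type*} (G : SimpleGraph W) : Prop :=
  ∀ n : ℕ, 4 ≤ n → IsEmpty (SimpleGraph.cycleGraph n ↪g G)

/-!
For chordal graphs, well-covered already implies vertex decomposable, and `G \ N[x]` is
well-covered whenever `G` is, so `x ∈ Shed G` as soon as `G \ x` is well-covered. The key fact is
that deleting a non-simplicial vertex `u` keeps a chordal well-covered graph well-covered.
Otherwise some maximal independent set `M ∋ u` leaves `u` without a private neighbour, and
counting maximal independent sets through two non-adjacent neighbours `a`, `b` of `u` (whose
surroundings are rigidly structured by the absence of induced cycles of length 4 to 7) yields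
one with `|M| + 1` elements. So a vertex `v ∉ Shed G` is simplicial and not isolated; deleting a
neighbour of a simplicial vertex keeps the graph well-covered, hence every neighbour of `v` lies
in `Shed G`.
-/
section Cycles

open SimpleGraph

variable {G : SimpleGraph V}

theorem adj_iff_cycleGraph_adj_of_lt {n : ℕ} {f : Fin n → V}
    (hf : ∀ i j, i < j → (G.Adj (f i) (f j) ↔ (cycleGraph n).Adj i j)) (i j : Fin n) :
    G.Adj (f i) (f j) ↔ (cycleGraph n).Adj i j := by
  rcases lt_trichotomy i j with h | rfl | h
  · exact hf i j h
  · simp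
  · rw [G.adj_comm, (cycleGraph n).adj_comm]
    exact hf j i h

open Fin.CommRing in
/-- On five or more vertices the adjacency pattern of a cycle forces the vertices to be
distinct: positions `i ≠ j` carrying the same vertex would share both cycle neighbours, so
`j = i + 2 = i - 2`. -/
theorem injective_of_adj_iff_cycleGraph_adj {n : ℕ} (hn : 5 ≤ n) {f : Fin n → V}
    (hf : ∀ i j, G.Adj (f i) (f j) ↔ (cycleGraph n).Adj i j) : Function.Injective f := by
  obtain ⟨m, rfl⟩ : ∃ m, n = m + 2 := ⟨n - 2, by omega⟩
  intro i j hij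
  have hnbr : ∀ k, (cycleGraph (m + 2)).Adj i k → (cycleGraph (m + 2)).Adj j k :=
    fun k hk => by rwa [← hf, ← hij, hf]
  have hsucc := hnbr (i + 1) (by simp [cycleGraph_adj])
  have hpred := hnbr (i - 1) (by simp [cycleGraph_adj])
  rw [cycleGraph_adj] at hsucc hpred
  rcases hsucc with hsucc | hsucc
  · rcases hpred with hpred | hpred
    · linear_combination -hpred
    · have h4 : (4 : Fin (m + 2)) = 0 := by linear_combination -hsucc - hpred
      rw [Fin.ext_iff, Fin.val_zero] at h4
      simp [Nat.mod_eq_of_lt (show 4 < m + 2 by omega)] at h4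
  · linear_combination hsucc

theorem IsChordalGraph.false_of_cycle (hch : IsChordalGraph G) {n : ℕ} (hn : 4 ≤ n)
    {f : Fin n → V} (hinj : Function.Injective f)
    (hf : ∀ i j, i < j → (G.Adj (f i) (f j) ↔ (cycleGraph n).Adj i j)) : False :=
  (hch n hn).false ⟨⟨f, hinj⟩, adj_iff_cycleGraph_adj_of_lt hf _ _⟩

theorem IsChordalGraph.false_of_cycle_of_five_le (hch : IsChordalGraph G) {n : ℕ} (hn : 5 ≤ n)
    {f : Fin n → V} (hf : ∀ i j, i < j → (G.Adj (f i) (f j) ↔ (cycleGraph n).Adj i j)) :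
    False :=
  hch.false_of_cycle (by omega)
    (injective_of_adj_iff_cycleGraph_adj hn (adj_iff_cycleGraph_adj_of_lt hf)) hf

theorem IsChordalGraph.false_of_cycle4 (hch : IsChordalGraph G) {v₀ v₁ v₂ v₃ : V}
    (e₀₁ : G.Adj v₀ v₁) (e₁₂ : G.Adj v₁ v₂) (e₂₃ : G.Adj v₂ v₃) (e₃₀ : G.Adj v₃ v₀)
    (d₀₂ : ¬ G.Adj v₀ v₂) (d₁₃ : ¬ G.Adj v₁ v₃) (n₀₂ : v₀ ≠ v₂) (n₁₃ : v₁ ≠ v₃) : False := by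
  refine hch.false_of_cycle le_rfl (f := ![v₀, v₁, v₂, v₃]) ?_ ?_
  · intro i j h
    fin_cases i <;> fin_cases j <;>
      simp [e₀₁.ne, e₁₂.ne, e₂₃.ne, e₃₀.ne, n₀₂, n₁₃, e₀₁.ne.symm, e₁₂.ne.symm, e₂₃.ne.symm,
        e₃₀.ne.symm, n₀₂.symm, n₁₃.symm] at h ⊢
  · intro i j hij
    fin_cases i <;> fin_cases j <;> simp +decide [e₀₁, e₁₂, e₂₃, e₃₀.symm, d₀₂, d₁₃] at hij ⊢

theorem IsChordalGraph.false_of_cycle5 (hch : IsChordalGraph G) {v₀ v₁ v₂ v₃ v₄ : V}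
    (e₀₁ : G.Adj v₀ v₁) (e₁₂ : G.Adj v₁ v₂) (e₂₃ : G.Adj v₂ v₃) (e₃₄ : G.Adj v₃ v₄)
    (e₄₀ : G.Adj v₄ v₀) (d₀₂ : ¬ G.Adj v₀ v₂) (d₀₃ : ¬ G.Adj v₀ v₃) (d₁₃ : ¬ G.Adj v₁ v₃)
    (d₁₄ : ¬ G.Adj v₁ v₄) (d₂₄ : ¬ G.Adj v₂ v₄) : False := by
  refine hch.false_of_cycle_of_five_le le_rfl (f := ![v₀, v₁, v₂, v₃, v₄]) ?_
  intro i j hij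
  fin_cases i <;> fin_cases j <;>
    simp +decide [e₀₁, e₁₂, e₂₃, e₃₄, e₄₀.symm, d₀₂, d₀₃, d₁₃, d₁₄, d₂₄] at hij ⊢

theorem IsChordalGraph.false_of_cycle6 (hch : IsChordalGraph G) {v₀ v₁ v₂ v₃ v₄ v₅ : V}
    (e₀₁ : G.Adj v₀ v₁) (e₁₂ : G.Adj v₁ v₂) (e₂₃ : G.Adj v₂ v₃) (e₃₄ : G.Adj v₃ v₄)
    (e₄₅ : G.Adj v₄ v₅) (e₅₀ : G.Adj v₅ v₀) (d₀₂ : ¬ G.Adj v₀ v₂) (d₀₃ : ¬ G.Adj v₀ v₃)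
    (d₀₄ : ¬ G.Adj v₀ v₄) (d₁₃ : ¬ G.Adj v₁ v₃) (d₁₄ : ¬ G.Adj v₁ v₄) (d₁₅ : ¬ G.Adj v₁ v₅)
    (d₂₄ : ¬ G.Adj v₂ v₄) (d₂₅ : ¬ G.Adj v₂ v₅) (d₃₅ : ¬ G.Adj v₃ v₅) : False := by
  refine hch.false_of_cycle_of_five_le (by norm_num) (f := ![v₀, v₁, v₂, v₃, v₄, v₅]) ?_
  intro i j hij
  fin_cases i <;> fin_cases j <;>
    simp +decide [e₀₁, e₁₂, e₂₃, e₃₄, e₄₅, e₅₀.symm, d₀₂, d₀₃, d₀₄, d₁₃, d₁₄, d₁₅, d₂₄, d₂₅,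
      d₃₅] at hij ⊢

theorem IsChordalGraph.false_of_cycle7 (hch : IsChordalGraph G) {v₀ v₁ v₂ v₃ v₄ v₅ v₆ : V}
    (e₀₁ : G.Adj v₀ v₁) (e₁₂ : G.Adj v₁ v₂) (e₂₃ : G.Adj v₂ v₃) (e₃₄ : G.Adj v₃ v₄)
    (e₄₅ : G.Adj v₄ v₅) (e₅₆ : G.Adj v₅ v₆) (e₆₀ : G.Adj v₆ v₀) (d₀₂ : ¬ G.Adj v₀ v₂)
    (d₀₃ : ¬ G.Adj v₀ v₃) (d₀₄ : ¬ G.Adj v₀ v₄) (d₀₅ : ¬ G.Adj v₀ v₅) (d₁₃ : ¬ G.Adj v₁ v₃)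
    (d₁₄ : ¬ G.Adj v₁ v₄) (d₁₅ : ¬ G.Adj v₁ v₅) (d₁₆ : ¬ G.Adj v₁ v₆) (d₂₄ : ¬ G.Adj v₂ v₄)
    (d₂₅ : ¬ G.Adj v₂ v₅) (d₂₆ : ¬ G.Adj v₂ v₆) (d₃₅ : ¬ G.Adj v₃ v₅) (d₃₆ : ¬ G.Adj v₃ v₆)
    (d₄₆ : ¬ G.Adj v₄ v₆) : False := by
  refine hch.false_of_cycle_of_five_le (by norm_num) (f := ![v₀, v₁, v₂, v₃, v₄, v₅, v₆]) ?_
  intro i j hij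
  fin_cases i <;> fin_cases j <;>
    simp +decide [e₀₁, e₁₂, e₂₃, e₃₄, e₄₅, e₅₆, e₆₀.symm, d₀₂, d₀₃, d₀₄, d₀₅, d₁₃, d₁₄, d₁₅,
      d₁₆, d₂₄, d₂₅, d₂₆, d₃₅, d₃₆, d₄₆] at hij ⊢

end Cycles

section IndependentSets

open Finset

variable {G : SimpleGraph V} {A I M S T U : Finset V} {t u v x : V}

theorem mem_delClosedNbhd : t ∈ delClosedNbhd G A x ↔ t ∈ A ∧ t ≠ x ∧ ¬ G.Adj x t :=
  mem_filter

noncomputable def delClosedNbhds (G : SimpleGraph V) (A I : Finset V) : Finset V :=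
  A.filter fun y => y ∉ I ∧ ∀ w ∈ I, ¬ G.Adj w y

theorem mem_delClosedNbhds : t ∈ delClosedNbhds G A I ↔ t ∈ A ∧ t ∉ I ∧ ∀ w ∈ I, ¬ G.Adj w t :=
  mem_filter

theorem delClosedNbhd_eq_delClosedNbhds : delClosedNbhd G A x = delClosedNbhds G A {x} := by
  ext t
  simp [mem_delClosedNbhd, mem_delClosedNbhds]

theorem IsIndepIn.subset (hS : IsIndepIn G A S) (hTS : T ⊆ S) : IsIndepIn G A T :=
  ⟨hTS.trans hS.1, fun p hp q hq => hS.2 p (hTS hp) q (hTS hq)⟩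

theorem IsIndepIn.insert (hS : IsIndepIn G A S) (ht : t ∈ A) (htS : ∀ s ∈ S, ¬ G.Adj s t) :
    IsIndepIn G A (insert t S) := by
  refine ⟨insert_subset ht hS.1, ?_⟩
  simp only [mem_insert]
  rintro p (rfl | hp) q (rfl | hq)
  · exact G.irrefl
  · exact fun h => htS q hq h.symm
  · exact htS p hp
  · exact hS.2 p hp q hq

theorem isMaxIndepIn_iff :
    IsMaxIndepIn G A S ↔ IsIndepIn G A S ∧ ∀ t ∈ A, t ∉ S → ∃ s ∈ S, G.Adj s t := by
  refine ⟨fun ⟨hS, hmax⟩ => ⟨hS, fun t ht htS => ?_⟩, fun ⟨hS, hdom⟩ => ⟨hS, ?_⟩⟩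
  · by_contra! h
    exact htS (hmax _ (hS.insert ht h) (subset_insert t S) ▸ mem_insert_self t S)
  · refine fun T hT hST => (hST.antisymm fun t ht => ?_).symm
    by_contra htS
    obtain ⟨s, hs, hst⟩ := hdom t (hT.1 ht) htS
    exact hT.2 s (hST hs) t ht hst

theorem exists_isMaxIndepIn (G : SimpleGraph V) (A : Finset V) : ∃ S, IsMaxIndepIn G A S := by
  obtain ⟨S, hS, hmax⟩ := (A.powerset.filter (IsIndepIn G A)).exists_max_image card
    ⟨∅, mem_filter.2 ⟨empty_mem_powerset A, empty_subset A, by simp⟩⟩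
  refine ⟨S, (mem_filter.1 hS).2, fun T hT hST => ?_⟩
  exact (eq_of_subset_of_card_le hST (hmax T (mem_filter.2 ⟨mem_powerset.2 hT.1, hT⟩))).symm

theorem IsIndepIn.isMaxIndepIn_union (hI : IsIndepIn G A I)
    (hU : IsMaxIndepIn G (delClosedNbhds G A I) U) : IsMaxIndepIn G A (I ∪ U) := by
  rw [isMaxIndepIn_iff] at hU ⊢
  obtain ⟨⟨hUsub, hUindep⟩, hUdom⟩ := hU
  have hU' : ∀ y ∈ U, y ∈ A ∧ y ∉ I ∧ ∀ w ∈ I, ¬ G.Adj w y :=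
    fun y hy => mem_delClosedNbhds.1 (hUsub hy)
  refine ⟨⟨union_subset hI.1 fun y hy => (hU' y hy).1, ?_⟩, fun t ht htIU => ?_⟩
  · simp only [mem_union]
    rintro p (hp | hp) q (hq | hq)
    · exact hI.2 p hp q hq
    · exact (hU' q hq).2.2 p hp
    · exact fun h => (hU' p hp).2.2 q hq h.symm
    · exact hUindep p hp q hq
  rw [mem_union, not_or] at htIU
  by_cases htI : ∃ w ∈ I, G.Adj w t
  · obtain ⟨w, hw, hwt⟩ := htI
    exact ⟨w, mem_union_left U hw, hwt⟩
  · push Not at htI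
    obtain ⟨s, hs, hst⟩ := hUdom t (mem_delClosedNbhds.2 ⟨ht, htIU.1, htI⟩) htIU.2
    exact ⟨s, mem_union_right I hs, hst⟩

theorem WellCoveredOn.card_add_card_eq (hwc : WellCoveredOn G A) (hI : IsIndepIn G A I)
    (hU : IsMaxIndepIn G (delClosedNbhds G A I) U) (hM : IsMaxIndepIn G A M) :
    I.card + U.card = M.card := by
  rw [← card_union_of_disjoint
    (disjoint_right.2 fun y hy => (mem_delClosedNbhds.1 (hU.1.1 hy)).2.1)]
  exact hwc _ _ (hI.isMaxIndepIn_union hU) hM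

theorem WellCoveredOn.delClosedNbhds (hwc : WellCoveredOn G A) (hI : IsIndepIn G A I) :
    WellCoveredOn G (delClosedNbhds G A I) := fun S T hS hT => by
  have hS' := hwc.card_add_card_eq hI hS (hI.isMaxIndepIn_union hT)
  have hT' := hwc.card_add_card_eq hI hT (hI.isMaxIndepIn_union hT)
  omega

theorem WellCoveredOn.delClosedNbhd (hwc : WellCoveredOn G A) (hx : x ∈ A) :
    WellCoveredOn G (delClosedNbhd G A x) := by
  rw [delClosedNbhd_eq_delClosedNbhds]
  exact hwc.delClosedNbhds ⟨singleton_subset_iff.2 hx, by simp⟩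

theorem IsMaxIndepIn.of_erase (hS : IsMaxIndepIn G (A.erase v) S) (hv : ∃ s ∈ S, G.Adj s v) :
    IsMaxIndepIn G A S := by
  rw [isMaxIndepIn_iff] at hS ⊢
  refine ⟨⟨hS.1.1.trans (erase_subset v A), hS.1.2⟩, fun t ht htS => ?_⟩
  by_cases htv : t = v
  · exact htv ▸ hv
  · exact hS.2 t (mem_erase.2 ⟨htv, ht⟩) htS

theorem WellCoveredOn.erase (hwc : WellCoveredOn G A)
    (h : ∀ S, IsMaxIndepIn G (A.erase v) S → ∃ s ∈ S, G.Adj s v) :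
    WellCoveredOn G (A.erase v) :=
  fun S T hS hT => hwc S T (hS.of_erase (h S hS)) (hT.of_erase (h T hT))

theorem WellCoveredOn.erase_of_adj_simplicial (hwc : WellCoveredOn G A) (hu : u ∈ A)
    (hsimp : ∀ x ∈ A, ∀ y ∈ A, G.Adj u x → G.Adj u y → x ≠ y → G.Adj x y) (hv : v ∈ A)
    (huv : G.Adj u v) : WellCoveredOn G (A.erase v) := by
  refine hwc.erase fun S hS => ?_
  by_cases huS : u ∈ S
  · exact ⟨u, huS, huv⟩
  · obtain ⟨m, hmS, hmu⟩ := (isMaxIndepIn_iff.1 hS).2 u (mem_erase.2 ⟨huv.ne, hu⟩) huS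
    obtain ⟨hmv, hmA⟩ := mem_erase.1 (hS.1.1 hmS)
    exact ⟨m, hmS, hsimp m hmA v hv hmu.symm huv hmv⟩

end IndependentSets

/-- The situation in which `M.erase u` is a maximal independent set of `A.erase u`, one element
short, while `u` is not simplicial. -/
structure NoPrivateNbr (G : SimpleGraph V) (A M : Finset V) (u a b : V) : Prop where
  isMaxIndepIn : IsMaxIndepIn G A M
  mem : u ∈ M
  left_mem : a ∈ A
  right_mem : b ∈ A
  adj_left : G.Adj u a
  adj_right : G.Adj u b
  not_adj : ¬ G.Adj a b
  ne : a ≠ b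
  exists_adj : ∀ y ∈ A, y ∉ M → G.Adj u y → ∃ m ∈ M.erase u, G.Adj m y

namespace NoPrivateNbr

open Finset

variable {G : SimpleGraph V} {A M P : Finset V} {u a b t w w' k₁ k₂ : V}

theorem symm (c : NoPrivateNbr G A M u a b) : NoPrivateNbr G A M u b a :=
  ⟨c.isMaxIndepIn, c.mem, c.right_mem, c.left_mem, c.adj_right, c.adj_left,
    fun h => c.not_adj h.symm, c.ne.symm, c.exists_adj⟩

theorem not_adj_of_mem (c : NoPrivateNbr G A M u a b) (hw : w ∈ M) (hw' : w' ∈ M) :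
    ¬ G.Adj w w' :=
  c.isMaxIndepIn.1.2 w hw w' hw'

theorem left_not_mem (c : NoPrivateNbr G A M u a b) : a ∉ M :=
  fun ha => c.not_adj_of_mem c.mem ha c.adj_left

theorem exists_adj_erase (c : NoPrivateNbr G A M u a b) (ht : t ∈ A) (htM : t ∉ M) :
    ∃ m ∈ M.erase u, G.Adj m t := by
  by_cases hut : G.Adj u t
  · exact c.exists_adj t ht htM hut
  · obtain ⟨m, hm, hmt⟩ := (isMaxIndepIn_iff.1 c.isMaxIndepIn).2 t ht htM
    exact ⟨m, mem_erase.2 ⟨fun h => hut (h ▸ hmt), hm⟩, hmt⟩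

theorem restrict (c : NoPrivateNbr G A M u a b) (hPM : P ⊆ M.erase u)
    (hPa : ∀ w ∈ P, ¬ G.Adj a w) (hPb : ∀ w ∈ P, ¬ G.Adj b w) :
    NoPrivateNbr G (delClosedNbhds G A P) (M \ P) u a b := by
  have hPM' : ∀ w ∈ P, w ∈ M := fun w hw => mem_of_mem_erase (hPM hw)
  have hmem : ∀ y ∈ A, y ∉ M → (∀ w ∈ P, ¬ G.Adj w y) → y ∈ delClosedNbhds G A P :=
    fun y hy hyM hyP => mem_delClosedNbhds.2 ⟨hy, fun h => hyM (hPM' y h), hyP⟩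
  refine ⟨isMaxIndepIn_iff.2 ⟨⟨fun m hm => ?_, fun p hp q hq => ?_⟩, fun t ht htM => ?_⟩,
    mem_sdiff.2 ⟨c.mem, fun h => (ne_of_mem_erase (hPM h)) rfl⟩,
    hmem a c.left_mem c.left_not_mem fun w hw h => hPa w hw h.symm,
    hmem b c.right_mem c.symm.left_not_mem fun w hw h => hPb w hw h.symm,
    c.adj_left, c.adj_right, c.not_adj, c.ne, fun y hy hyM huy => ?_⟩
  · obtain ⟨hmM, hmP⟩ := mem_sdiff.1 hm
    exact mem_delClosedNbhds.2 ⟨c.isMaxIndepIn.1.1 hmM, hmP,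
      fun w hw => c.not_adj_of_mem (hPM' w hw) hmM⟩
  · exact c.not_adj_of_mem (mem_sdiff.1 hp).1 (mem_sdiff.1 hq).1
  · obtain ⟨htA, htP, htadj⟩ := mem_delClosedNbhds.1 ht
    obtain ⟨m, hm, hmt⟩ :=
      (isMaxIndepIn_iff.1 c.isMaxIndepIn).2 t htA fun h => htM (mem_sdiff.2 ⟨h, htP⟩)
    exact ⟨m, mem_sdiff.2 ⟨hm, fun h => htadj m h hmt⟩, hmt⟩
  · obtain ⟨hyA, hyP, hyadj⟩ := mem_delClosedNbhds.1 hy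
    obtain ⟨m, hm, hmy⟩ := c.exists_adj y hyA (fun h => hyM (mem_sdiff.2 ⟨h, hyP⟩)) huy
    obtain ⟨hmu, hmM⟩ := mem_erase.1 hm
    exact ⟨m, mem_erase.2 ⟨hmu, mem_sdiff.2 ⟨hmM, fun h => hyadj m h hmy⟩⟩, hmy⟩

theorem not_adj_right_of_mem (hch : IsChordalGraph G) (c : NoPrivateNbr G A M u a b)
    (hw : w ∈ M.erase u) (haw : G.Adj a w) : ¬ G.Adj b w := fun hbw =>
  hch.false_of_cycle4 c.adj_left haw hbw.symm c.adj_right.symm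
    (c.not_adj_of_mem c.mem (mem_of_mem_erase hw)) c.not_adj (ne_of_mem_erase hw).symm c.ne

theorem not_adj_of_nbr (hch : IsChordalGraph G) (c : NoPrivateNbr G A M u a b)
    (hw : w ∈ M.erase u) (haw : G.Adj a w) (hwt : G.Adj w t) (hta : t ≠ a)
    (hat : ¬ G.Adj a t) : ¬ G.Adj u t := fun hut =>
  hch.false_of_cycle4 c.adj_left haw hwt hut.symm
    (c.not_adj_of_mem c.mem (mem_of_mem_erase hw)) hat (ne_of_mem_erase hw).symm hta.symm

theorem not_adj_right_of_nbr (hch : IsChordalGraph G) (c : NoPrivateNbr G A M u a b)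
    (hw : w ∈ M.erase u) (haw : G.Adj a w) (hwt : G.Adj w t) (hta : t ≠ a)
    (hat : ¬ G.Adj a t) : ¬ G.Adj b t := fun hbt =>
  hch.false_of_cycle5 hbt.symm c.adj_right.symm c.adj_left haw hwt
    (fun h => c.not_adj_of_nbr hch hw haw hwt hta hat h.symm) (fun h => hat h.symm)
    (fun h => c.not_adj h.symm) (c.not_adj_right_of_mem hch hw haw)
    (c.not_adj_of_mem c.mem (mem_of_mem_erase hw))

theorem false_of_nbr_of_nbr (hch : IsChordalGraph G) (c : NoPrivateNbr G A M u a b)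
    (hw : w ∈ M.erase u) (haw : G.Adj a w) (hwt : G.Adj w t) (hw' : w' ∈ M.erase u)
    (hbw' : G.Adj b w') (hw't : G.Adj w' t) (hta : t ≠ a) (hat : ¬ G.Adj a t)
    (hbt : ¬ G.Adj b t) : False :=
  hch.false_of_cycle6 hwt.symm haw.symm c.adj_left.symm c.adj_right hbw' hw't
    (fun h => hat h.symm) (fun h => c.not_adj_of_nbr hch hw haw hwt hta hat h.symm)
    (fun h => hbt h.symm) (c.not_adj_of_mem (mem_of_mem_erase hw) c.mem)
    (fun h => c.not_adj_right_of_mem hch hw haw h.symm)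
    (c.not_adj_of_mem (mem_of_mem_erase hw) (mem_of_mem_erase hw')) c.not_adj
    (c.symm.not_adj_right_of_mem hch hw' hbw') (c.not_adj_of_mem c.mem (mem_of_mem_erase hw'))

theorem isIndepIn_insert (hch : IsChordalGraph G) (c : NoPrivateNbr G A M u a b) :
    IsIndepIn G A (insert a ((M.erase u).filter (G.Adj b))) :=
  (c.isMaxIndepIn.1.subset ((filter_subset _ _).trans (erase_subset u M))).insert c.left_mem
    fun _ hw hwa => c.symm.not_adj_right_of_mem hch (mem_filter.1 hw).1 (mem_filter.1 hw).2 hwa.symm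

theorem isIndepIn_pair (c : NoPrivateNbr G A M u a b) : IsIndepIn G A {a, b} :=
  IsIndepIn.insert ⟨singleton_subset_iff.2 c.right_mem, by simp⟩ c.left_mem
    (by simpa using fun h => c.not_adj h.symm)

theorem mem_delClosedNbhds_insert (hch : IsChordalGraph G) (c : NoPrivateNbr G A M u a b)
    (ht : t ∈ A) (htM : t ∉ M) (hta : t ≠ a) (hat : ¬ G.Adj a t) (hbt : ¬ G.Adj b t)
    (hw : w ∈ M.erase u) (haw : G.Adj a w) (hwt : G.Adj w t) :
    t ∈ delClosedNbhds G A (insert a ((M.erase u).filter (G.Adj b))) := by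
  refine mem_delClosedNbhds.2 ⟨ht, ?_, ?_⟩
  · simp only [mem_insert, mem_filter, mem_erase, not_or]
    exact ⟨hta, fun h => htM h.1.2⟩
  · simp only [mem_insert, forall_eq_or_imp, mem_filter]
    exact ⟨hat, fun w' hw' hw't =>
      c.false_of_nbr_of_nbr hch hw haw hwt hw'.1 hw'.2 hw't hta hat hbt⟩

theorem exists_nbr_of_mem_delClosedNbhds_insert (hch : IsChordalGraph G)
    (c : NoPrivateNbr G A M u a b) (hsplit : ∀ w ∈ M.erase u, G.Adj a w ∨ G.Adj b w)
    (ht : t ∈ delClosedNbhds G A (insert a ((M.erase u).filter (G.Adj b)))) :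
    t ∈ delClosedNbhds G A {a, b} ∧ ¬ G.Adj u t ∧ ∃ w ∈ M.erase u, G.Adj a w ∧ G.Adj w t := by
  obtain ⟨htA, htI, htadj⟩ := mem_delClosedNbhds.1 ht
  simp only [mem_insert, mem_filter, not_or, forall_eq_or_imp] at htI htadj
  obtain ⟨hta, htB⟩ := htI
  obtain ⟨hat, htB'⟩ := htadj
  have htu : t ≠ u := fun h => hat (h ▸ c.adj_left.symm)
  have htM : t ∉ M := fun htM =>
    (hsplit t (mem_erase.2 ⟨htu, htM⟩)).elim hat fun hbt => htB ⟨mem_erase.2 ⟨htu, htM⟩, hbt⟩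
  obtain ⟨w, hw, hwt⟩ := c.exists_adj_erase htA htM
  have haw : G.Adj a w := (hsplit w hw).resolve_right fun hbw => htB' w ⟨hw, hbw⟩ hwt
  have htb : t ≠ b := fun h => c.not_adj_right_of_mem hch hw haw (h ▸ hwt).symm
  refine ⟨mem_delClosedNbhds.2 ⟨htA, ?_, ?_⟩, c.not_adj_of_nbr hch hw haw hwt hta hat,
    w, hw, haw, hwt⟩
  · simp [hta, htb]
  · simp [hat, c.not_adj_right_of_nbr hch hw haw hwt hta hat]

theorem mem_or_mem_of_mem_delClosedNbhds_pair (hch : IsChordalGraph G)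
    (c : NoPrivateNbr G A M u a b) (hsplit : ∀ w ∈ M.erase u, G.Adj a w ∨ G.Adj b w)
    (ht : t ∈ delClosedNbhds G A {a, b}) :
    t ∈ delClosedNbhds G A (insert b ((M.erase u).filter (G.Adj a))) ∨
      t ∈ delClosedNbhds G A (insert a ((M.erase u).filter (G.Adj b))) := by
  obtain ⟨htA, htab, hadj⟩ := mem_delClosedNbhds.1 ht
  simp only [mem_insert, mem_singleton, not_or, forall_eq_or_imp, forall_eq] at htab hadj
  obtain ⟨hta, htb⟩ := htab
  obtain ⟨hat, hbt⟩ := hadj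
  have htM : t ∉ M := fun htM =>
    (hsplit t (mem_erase.2 ⟨fun h => hat (h ▸ c.adj_left.symm), htM⟩)).elim hat hbt
  obtain ⟨w, hw, hwt⟩ := c.exists_adj_erase htA htM
  rcases hsplit w hw with haw | hbw
  · exact Or.inr (c.mem_delClosedNbhds_insert hch htA htM hta hat hbt hw haw hwt)
  · exact Or.inl (c.symm.mem_delClosedNbhds_insert hch htA htM htb hbt hat hw hbw hwt)

theorem not_adj_of_mem_delClosedNbhds_insert (hch : IsChordalGraph G)
    (c : NoPrivateNbr G A M u a b) (hsplit : ∀ w ∈ M.erase u, G.Adj a w ∨ G.Adj b w)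
    (h₁ : k₁ ∈ delClosedNbhds G A (insert a ((M.erase u).filter (G.Adj b))))
    (h₂ : k₂ ∈ delClosedNbhds G A (insert b ((M.erase u).filter (G.Adj a)))) :
    ¬ G.Adj k₁ k₂ := by
  intro h
  obtain ⟨hk₁, huk₁, w, hw, haw, hwk₁⟩ := c.exists_nbr_of_mem_delClosedNbhds_insert hch hsplit h₁
  obtain ⟨hk₂, huk₂, w', hw', hbw', hw'k₂⟩ :=
    c.symm.exists_nbr_of_mem_delClosedNbhds_insert hch (fun w hw => (hsplit w hw).symm) h₂
  simp only [mem_delClosedNbhds, mem_insert, mem_singleton, forall_eq_or_imp, forall_eq] at hk₁ hk₂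
  have hw'k₁ : ¬ G.Adj w' k₁ :=
    (mem_delClosedNbhds.1 h₁).2.2 w' (mem_insert_of_mem (mem_filter.2 ⟨hw', hbw'⟩))
  have hwk₂ : ¬ G.Adj w k₂ :=
    (mem_delClosedNbhds.1 h₂).2.2 w (mem_insert_of_mem (mem_filter.2 ⟨hw, haw⟩))
  have hwM := mem_of_mem_erase hw
  have hw'M := mem_of_mem_erase hw'
  exact hch.false_of_cycle7 hwk₁.symm haw.symm c.adj_left.symm c.adj_right hbw' hw'k₂ h.symm
    (fun h => hk₁.2.2.1 h.symm) (fun h => huk₁ h.symm) (fun h => hk₁.2.2.2 h.symm)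
    (fun h => hw'k₁ h.symm) (c.not_adj_of_mem hwM c.mem)
    (fun h => c.not_adj_right_of_mem hch hw haw h.symm) (c.not_adj_of_mem hwM hw'M) hwk₂
    c.not_adj (c.symm.not_adj_right_of_mem hch hw' hbw') hk₂.2.2.2
    (c.not_adj_of_mem c.mem hw'M) huk₂ hk₂.2.2.1

theorem disjoint_delClosedNbhds_insert (hch : IsChordalGraph G) (c : NoPrivateNbr G A M u a b)
    (hsplit : ∀ w ∈ M.erase u, G.Adj a w ∨ G.Adj b w) :
    Disjoint (delClosedNbhds G A (insert b ((M.erase u).filter (G.Adj a))))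
      (delClosedNbhds G A (insert a ((M.erase u).filter (G.Adj b)))) := by
  refine disjoint_right.2 fun t htB htA => ?_
  obtain ⟨-, -, w, hw, haw, hwt⟩ := c.exists_nbr_of_mem_delClosedNbhds_insert hch hsplit htB
  exact (mem_delClosedNbhds.1 htA).2.2 w (mem_insert_of_mem (mem_filter.2 ⟨hw, haw⟩)) hwt

theorem isMaxIndepIn_union (hch : IsChordalGraph G) (c : NoPrivateNbr G A M u a b)
    (hsplit : ∀ w ∈ M.erase u, G.Adj a w ∨ G.Adj b w) {UA UB : Finset V}
    (hUA : IsMaxIndepIn G (delClosedNbhds G A (insert b ((M.erase u).filter (G.Adj a)))) UA)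
    (hUB : IsMaxIndepIn G (delClosedNbhds G A (insert a ((M.erase u).filter (G.Adj b)))) UB) :
    IsMaxIndepIn G (delClosedNbhds G A {a, b}) (UA ∪ UB) := by
  have hsplit' : ∀ w ∈ M.erase u, G.Adj b w ∨ G.Adj a w := fun w hw => (hsplit w hw).symm
  have hKA : ∀ t ∈ UA, t ∈ delClosedNbhds G A {a, b} := fun t ht => by
    rw [pair_comm]
    exact (c.symm.exists_nbr_of_mem_delClosedNbhds_insert hch hsplit' (hUA.1.1 ht)).1
  have hKB : ∀ t ∈ UB, t ∈ delClosedNbhds G A {a, b} := fun t ht =>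
    (c.exists_nbr_of_mem_delClosedNbhds_insert hch hsplit (hUB.1.1 ht)).1
  refine isMaxIndepIn_iff.2 ⟨⟨union_subset hKA hKB, ?_⟩, fun t ht htU => ?_⟩
  · simp only [mem_union]
    rintro p (hp | hp) q (hq | hq)
    · exact hUA.1.2 p hp q hq
    · exact fun h =>
        c.not_adj_of_mem_delClosedNbhds_insert hch hsplit (hUB.1.1 hq) (hUA.1.1 hp) h.symm
    · exact c.not_adj_of_mem_delClosedNbhds_insert hch hsplit (hUB.1.1 hp) (hUA.1.1 hq)
    · exact hUB.1.2 p hp q hq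
  rw [mem_union, not_or] at htU
  rcases c.mem_or_mem_of_mem_delClosedNbhds_pair hch hsplit ht with htA | htB
  · obtain ⟨s, hs, hst⟩ := (isMaxIndepIn_iff.1 hUA).2 t htA htU.1
    exact ⟨s, mem_union_left UB hs, hst⟩
  · obtain ⟨s, hs, hst⟩ := (isMaxIndepIn_iff.1 hUB).2 t htB htU.2
    exact ⟨s, mem_union_right UA hs, hst⟩

/-- With `M_a`, `M_b` the vertices of `M - u` adjacent to `a`, resp. `b`, we have
`|M| = 1 + |M_a| + |M_b|`. The vertices outside `N[a] ∪ N[b]` split into those with `M`-neighbours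
only in `M_a` and those with `M`-neighbours only in `M_b`, with no edges between the two parts.
As `{a} ∪ M_b`, resp. `{b} ∪ M_a`, extends by any maximal independent set of one part to a
maximal independent set of `A`, the parts have independence numbers `|M_a|` and `|M_b|`, so
`{a, b}` extends to a maximal independent set with `|M| + 1` elements. -/
theorem false_of_forall_adj (hch : IsChordalGraph G) (hwc : WellCoveredOn G A)
    (c : NoPrivateNbr G A M u a b) (hsplit : ∀ w ∈ M.erase u, G.Adj a w ∨ G.Adj b w) :
    False := by
  have hM : M.card =
      ((M.erase u).filter (G.Adj a)).card + ((M.erase u).filter (G.Adj b)).card + 1 := by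
    rw [← card_erase_add_one c.mem, ← card_union_of_disjoint, ← filter_or,
      filter_true_of_mem hsplit]
    exact disjoint_filter.2 fun w hw haw hbw => c.not_adj_right_of_mem hch hw haw hbw
  obtain ⟨UA, hUA⟩ :=
    exists_isMaxIndepIn G (delClosedNbhds G A (insert b ((M.erase u).filter (G.Adj a))))
  obtain ⟨UB, hUB⟩ :=
    exists_isMaxIndepIn G (delClosedNbhds G A (insert a ((M.erase u).filter (G.Adj b))))
  have hA := hwc.card_add_card_eq (c.symm.isIndepIn_insert hch) hUA c.isMaxIndepIn
  have hB := hwc.card_add_card_eq (c.isIndepIn_insert hch) hUB c.isMaxIndepIn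
  have hAB := hwc.card_add_card_eq c.isIndepIn_pair (c.isMaxIndepIn_union hch hsplit hUA hUB)
    c.isMaxIndepIn
  rw [card_insert_of_notMem fun h => c.symm.left_not_mem (mem_of_mem_erase (mem_filter.1 h).1)]
    at hA
  rw [card_insert_of_notMem fun h => c.left_not_mem (mem_of_mem_erase (mem_filter.1 h).1)] at hB
  rw [card_pair c.ne, card_union_of_disjoint ((c.disjoint_delClosedNbhds_insert hch hsplit).mono
    hUA.1.1 hUB.1.1)] at hAB
  omega

end NoPrivateNbr

open Finset in
/-- Deleting the closed neighbourhoods of the vertices of `M - u` that are adjacent to neither `a`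
nor `b` reduces to the case `NoPrivateNbr.false_of_forall_adj`. -/
theorem IsChordalGraph.false_of_noPrivateNbr {G : SimpleGraph V} {A M : Finset V} {u a b : V}
    (hch : IsChordalGraph G) (hwc : WellCoveredOn G A) (c : NoPrivateNbr G A M u a b) : False := by
  set P := (M.erase u).filter fun w => ¬ G.Adj a w ∧ ¬ G.Adj b w
  have hP : IsIndepIn G A P :=
    c.isMaxIndepIn.1.subset ((filter_subset _ _).trans (erase_subset u M))
  refine (c.restrict (filter_subset _ _) (fun w hw => (mem_filter.1 hw).2.1)
    (fun w hw => (mem_filter.1 hw).2.2)).false_of_forall_adj hch (hwc.delClosedNbhds hP) ?_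
  intro w hw
  rw [mem_erase, mem_sdiff] at hw
  by_contra! h
  exact hw.2.2 (mem_filter.2 ⟨mem_erase.2 ⟨hw.1, hw.2.1⟩, h⟩)

section WellCovered

open Finset

variable {G : SimpleGraph V} {A : Finset V} {a b u x y : V}

theorem WellCoveredOn.erase_of_not_simplicial (hch : IsChordalGraph G) (hwc : WellCoveredOn G A)
    (hu : u ∈ A) (ha : a ∈ A) (hb : b ∈ A) (hua : G.Adj u a) (hub : G.Adj u b)
    (hab : ¬ G.Adj a b) (hne : a ≠ b) : WellCoveredOn G (A.erase u) := by
  refine hwc.erase fun S hS => ?_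
  by_contra! hSu
  have huS : u ∉ S := fun h => (mem_erase.1 (hS.1.1 h)).1 rfl
  have hM : IsMaxIndepIn G A (insert u S) := by
    refine isMaxIndepIn_iff.2 ⟨IsIndepIn.insert ⟨hS.1.1.trans (erase_subset u A), hS.1.2⟩ hu hSu,
      fun t ht htM => ?_⟩
    rw [mem_insert, not_or] at htM
    obtain ⟨s, hs, hst⟩ := (isMaxIndepIn_iff.1 hS).2 t (mem_erase.2 ⟨htM.1, ht⟩) htM.2
    exact ⟨s, mem_insert_of_mem hs, hst⟩
  refine hch.false_of_noPrivateNbr hwc ⟨hM, mem_insert_self u S, ha, hb, hua, hub, hab, hne, ?_⟩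
  intro y hy hyM _
  obtain ⟨m, hmS, hmy⟩ := (isMaxIndepIn_iff.1 hS).2 y
    (mem_erase.2 ⟨fun h => hyM (h ▸ mem_insert_self u S), hy⟩) fun h => hyM (mem_insert_of_mem h)
  exact ⟨m, by rwa [erase_insert huS], hmy⟩

theorem WellCoveredOn.erase_of_adj (hch : IsChordalGraph G) (hwc : WellCoveredOn G A)
    (hx : x ∈ A) (hy : y ∈ A) (hxy : G.Adj x y) (hx' : ¬ WellCoveredOn G (A.erase x)) :
    WellCoveredOn G (A.erase y) := by
  refine hwc.erase_of_adj_simplicial hx (fun a ha b hb hxa hxb hne => ?_) hy hxy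
  by_contra hab
  exact hx' (hwc.erase_of_not_simplicial hch hx ha hb hxa hxb hab hne)

theorem IsChordalGraph.vertexDecomposableOn (hch : IsChordalGraph G) (hwc : WellCoveredOn G A) :
    VertexDecomposableOn G A := by
  induction A using Finset.strongInduction with
  | H A ih =>
    rw [VertexDecomposableOn]
    refine ⟨hwc, ?_⟩
    by_cases hedge : ∃ x ∈ A, ∃ y ∈ A, G.Adj x y
    · obtain ⟨x, hx, y, hy, hxy⟩ := hedge
      obtain ⟨z, hz, hwcz⟩ : ∃ z ∈ A, WellCoveredOn G (A.erase z) := by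
        by_cases hx' : WellCoveredOn G (A.erase x)
        · exact ⟨x, hx, hx'⟩
        · exact ⟨y, hy, hwc.erase_of_adj hch hx hy hxy hx'⟩
      exact Or.inr ⟨z, hz, ih _ (erase_ssubset hz) hwcz,
        ih _ (filter_ssubset.2 ⟨z, hz, by simp⟩) (hwc.delClosedNbhd hz)⟩
    · push Not at hedge
      exact Or.inl hedge

end WellCovered

/-- If a chordal graph is vertex decomposable, then its set of shedding
vertices is a dominating set. -/
theorem statement5 {V : Type*} [Fintype V] (G : SimpleGraph V)
    (hch : IsChordalGraph G) (hvd : VertexDecomposable G) :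
    IsDominatingSet G (Shed G) := by
  have hwc : WellCoveredOn G Finset.univ := by
    rw [VertexDecomposable, VertexDecomposableOn] at hvd
    exact hvd.1
  have hshed : ∀ x, WellCoveredOn G (Finset.univ.erase x) → x ∈ Shed G := fun x hx =>
    ⟨hch.vertexDecomposableOn hx, hch.vertexDecomposableOn (hwc.delClosedNbhd (Finset.mem_univ x))⟩
  intro v hv
  have hv' : ¬ WellCoveredOn G (Finset.univ.erase v) := fun h => hv (hshed v h)
  obtain ⟨u, hvu⟩ : ∃ u, G.Adj v u := by
    by_contra! hiso
    refine hv' ?_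
    convert hwc.delClosedNbhd (Finset.mem_univ v) using 1
    ext y
    simp [mem_delClosedNbhd, hiso]
  exact ⟨u, hshed u (hwc.erase_of_adj hch (Finset.mem_univ v) (Finset.mem_univ u) hvu hv'),
    hvu.symm⟩
end

section
/- Let G be any finite simple graph on vertices {x_1, ..., x_n}, let k_1, ..., k_n be integers with each k_i ≥ 2, and let G̃ be the graph obtained from G by appending a clique of size k_i at each vertex x_i. Then Shed(G̃) is a dominating set of G̃; in fact the set {x_{1,1}, ..., x_{n,1}} of original vertices is contained in Shed(G̃) and is a dominating set of G̃. -/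
open scoped Classical

variable {V : Type*}

/-- The graph `G̃` obtained from `G` by appending a clique of size `k i` at each vertex `i`:
the vertex `x_{i,j}` is the pair `⟨i, j⟩` (0-indexed, so `x_{i,1}` of the paper is `⟨i, 0⟩`);
each fibre `{⟨i, j⟩ : j < k i}` induces a clique, and `⟨i, 0⟩` is adjacent to `⟨j, 0⟩`
exactly when `i` and `j` are adjacent in `G`. -/
def appendCliques {n : ℕ} (G : SimpleGraph (Fin n)) (k : Fin n → ℕ) :
    SimpleGraph (Σ i : Fin n, Fin (k i)) :=
  SimpleGraph.fromRel fun p q =>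
    p.1 = q.1 ∨ (p.2.val = 0 ∧ q.2.val = 0 ∧ G.Adj p.1 q.1)
/-!
Every fibre `{x_{i,j}}` of `G̃` is a clique containing a simplicial vertex, so a maximal
independent set meets each fibre exactly once and `G̃` is well-covered. The same holds on any
vertex set `A` in which each original vertex with a neighbour outside its fibre keeps another
vertex of its fibre. This invariant survives deleting an original vertex `x` or its closed
neighbourhood, so induction on `|A|` shows that `G̃ \ x` and `G̃ \ N[x]` are vertex decomposable.
Domination is immediate: every appended vertex is adjacent to the original vertex of its fibre.
-/

section

variable {H : SimpleGraph V}

lemma mem_delClosedNbhd_s6 {A : Finset V} {x y : V} :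
    y ∈ delClosedNbhd H A x ↔ y ∈ A ∧ y ≠ x ∧ ¬ H.Adj x y := by
  simp [delClosedNbhd]

lemma delClosedNbhd_ssubset {A : Finset V} {x : V} (hx : x ∈ A) :
    delClosedNbhd H A x ⊂ A :=
  Finset.filter_ssubset.mpr ⟨x, hx, by simp⟩

lemma IsMaxIndepIn.card_eq_card_image {ι : Type*} {A S : Finset V} (f : V → ι)
    (hclique : ∀ u ∈ A, ∀ v ∈ A, f u = f v → u ≠ v → H.Adj u v)
    (hsimplicial : ∀ w ∈ A, ∃ v ∈ A, f v = f w ∧ ∀ u ∈ A, H.Adj v u → f u = f w)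
    (hS : IsMaxIndepIn H A S) : S.card = (A.image f).card := by
  obtain ⟨⟨hSA, hind⟩, hmax⟩ := hS
  have hinj : Set.InjOn f S := fun u hu v hv huv => by
    by_contra hne
    exact hind u hu v hv (hclique u (hSA hu) v (hSA hv) huv hne)
  rw [← Finset.card_image_of_injOn hinj]
  refine congrArg _ (Finset.Subset.antisymm (Finset.image_subset_image hSA) fun i hi => ?_)
  obtain ⟨w, hwA, rfl⟩ := Finset.mem_image.mp hi
  obtain ⟨v, hvA, hvw, hv⟩ := hsimplicial w hwA
  rw [← hvw] at hv ⊢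
  by_contra hmiss
  have hvS : v ∉ S := fun h => hmiss (Finset.mem_image_of_mem f h)
  have hins : IsIndepIn H A (insert v S) := by
    have hvfree : ∀ u ∈ S, ¬ H.Adj v u := fun u hu huv =>
      hmiss (Finset.mem_image.mpr ⟨u, hu, hv u (hSA hu) huv⟩)
    refine ⟨Finset.insert_subset hvA hSA, ?_⟩
    simp only [Finset.mem_insert]
    rintro u (rfl | hu) w (rfl | hw) huw
    · exact H.irrefl huw
    · exact hvfree w hw huw
    · exact hvfree u hu huw.symm
    · exact hind u hu w hw huw
  exact hvS (hmax _ hins (Finset.subset_insert v S) ▸ Finset.mem_insert_self v S)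

lemma wellCoveredOn_of_cliques {ι : Type*} {A : Finset V} (f : V → ι)
    (hclique : ∀ u ∈ A, ∀ v ∈ A, f u = f v → u ≠ v → H.Adj u v)
    (hsimplicial : ∀ w ∈ A, ∃ v ∈ A, f v = f w ∧ ∀ u ∈ A, H.Adj v u → f u = f w) :
    WellCoveredOn H A := fun _ _ hS hT =>
  (hS.card_eq_card_image f hclique hsimplicial).trans
    (hT.card_eq_card_image f hclique hsimplicial).symm

lemma vertexDecomposableOn_of_invariant [DecidableEq V] (P : Finset V → Prop)
    (hwc : ∀ A, P A → WellCoveredOn H A)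
    (hstep : ∀ A, P A → A.Nonempty →
      ∃ x ∈ A, P (A.erase x) ∧ P (delClosedNbhd H A x))
    {A : Finset V} (hA : P A) : VertexDecomposableOn H A := by
  induction A using Finset.strongInduction with
  | H A ih =>
    rw [VertexDecomposableOn]
    refine ⟨hwc A hA, ?_⟩
    rcases A.eq_empty_or_nonempty with rfl | hne
    · exact Or.inl (by simp)
    obtain ⟨x, hx, herase, hdel⟩ := hstep A hA hne
    refine Or.inr ⟨x, hx, ?_, ih _ (delClosedNbhd_ssubset hx) hdel⟩
    -- the recursion in `VertexDecomposableOn` erases with the classical `DecidableEq` instance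
    convert ih _ (Finset.erase_ssubset hx) herase

lemma IsDominatingSet.mono {D E : Set V} (hD : IsDominatingSet H D) (hDE : D ⊆ E) :
    IsDominatingSet H E := fun v hv =>
  let ⟨u, hu, huv⟩ := hD v fun h => hv (hDE h)
  ⟨u, hDE hu, huv⟩

end

namespace appendCliques

variable {n : ℕ} {G : SimpleGraph (Fin n)} {k : Fin n → ℕ}

lemma ext_of_val {p q : Σ i : Fin n, Fin (k i)} (h1 : p.1 = q.1) (h2 : p.2.val = q.2.val) :
    p = q :=
  Sigma.ext h1 ((Fin.heq_ext_iff (congrArg k h1)).mpr h2)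

lemma adj_iff {p q : Σ i : Fin n, Fin (k i)} :
    (appendCliques G k).Adj p q ↔
      p ≠ q ∧ (p.1 = q.1 ∨ p.2.val = 0 ∧ q.2.val = 0 ∧ G.Adj p.1 q.1) := by
  simp only [appendCliques, SimpleGraph.fromRel_adj]
  grind [G.adj_comm]

lemma adj_of_fst_eq {p q : Σ i : Fin n, Fin (k i)} (hne : p ≠ q) (h : p.1 = q.1) :
    (appendCliques G k).Adj p q :=
  adj_iff.mpr ⟨hne, Or.inl h⟩

lemma fst_eq_of_adj {p q : Σ i : Fin n, Fin (k i)} (hadj : (appendCliques G k).Adj p q)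
    (hp : p.2.val ≠ 0) : q.1 = p.1 :=
  ((adj_iff.mp hadj).2.resolve_right fun h => hp h.1).symm

def HasFibreMates (G : SimpleGraph (Fin n)) (k : Fin n → ℕ)
    (A : Finset (Σ i : Fin n, Fin (k i))) : Prop :=
  ∀ p ∈ A, ∀ q ∈ A, p.2.val = 0 → q.2.val = 0 → G.Adj p.1 q.1 →
    ∃ r ∈ A, r.1 = p.1 ∧ r ≠ p

lemma HasFibreMates.exists_simplicial {A : Finset (Σ i : Fin n, Fin (k i))}
    (hA : HasFibreMates G k A) {p : Σ i : Fin n, Fin (k i)} (hp : p ∈ A) :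
    ∃ v ∈ A, v.1 = p.1 ∧ ∀ u ∈ A, (appendCliques G k).Adj v u → u.1 = p.1 := by
  by_cases hp0 : p.2.val = 0
  · by_cases hcross : ∃ q ∈ A, q.2.val = 0 ∧ G.Adj p.1 q.1
    · obtain ⟨q, hq, hq0, hpq⟩ := hcross
      obtain ⟨r, hr, hrp, hne⟩ := hA p hp q hq hp0 hq0 hpq
      have hr0 : r.2.val ≠ 0 := fun h => hne (ext_of_val hrp (h.trans hp0.symm))
      exact ⟨r, hr, hrp, fun u _ hru => (fst_eq_of_adj hru hr0).trans hrp⟩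
    · refine ⟨p, hp, rfl, fun u hu hpu => ?_⟩
      rcases (adj_iff.mp hpu).2 with h | ⟨-, hu0, hG⟩
      · exact h.symm
      · exact absurd ⟨u, hu, hu0, hG⟩ hcross
  · exact ⟨p, hp, rfl, fun u _ hpu => fst_eq_of_adj hpu hp0⟩

lemma HasFibreMates.wellCoveredOn {A : Finset (Σ i : Fin n, Fin (k i))}
    (hA : HasFibreMates G k A) : WellCoveredOn (appendCliques G k) A :=
  wellCoveredOn_of_cliques Sigma.fst (fun _ _ _ _ h hne => adj_of_fst_eq hne h)
    fun _ hp => hA.exists_simplicial hp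

-- Stated for every `DecidableEq` instance, so that it applies to the classical one in `Shed`.
lemma HasFibreMates.erase {_ : DecidableEq (Σ i : Fin n, Fin (k i))}
    {A : Finset (Σ i : Fin n, Fin (k i))} (hA : HasFibreMates G k A)
    {x : Σ i : Fin n, Fin (k i)} (hx : x.2.val = 0) : HasFibreMates G k (A.erase x) := by
  intro p hp q hq hp0 hq0 hpq
  obtain ⟨r, hr, hrp, hne⟩ :=
    hA p (Finset.mem_of_mem_erase hp) q (Finset.mem_of_mem_erase hq) hp0 hq0 hpq
  refine ⟨r, Finset.mem_erase.mpr ⟨?_, hr⟩, hrp, hne⟩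
  rintro rfl
  exact Finset.ne_of_mem_erase hp (ext_of_val hrp.symm (hp0.trans hx.symm))

lemma HasFibreMates.delClosedNbhd {A : Finset (Σ i : Fin n, Fin (k i))}
    (hA : HasFibreMates G k A) (x : Σ i : Fin n, Fin (k i)) :
    HasFibreMates G k (delClosedNbhd (appendCliques G k) A x) := by
  intro p hp q hq hp0 hq0 hpq
  obtain ⟨hpA, hpx, hxp⟩ := mem_delClosedNbhd_s6.mp hp
  obtain ⟨r, hr, hrp, hne⟩ := hA p hpA q (mem_delClosedNbhd_s6.mp hq).1 hp0 hq0 hpq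
  have hxr : x.1 ≠ r.1 := fun h => hxp (adj_of_fst_eq (Ne.symm hpx) (h.trans hrp))
  refine ⟨r, mem_delClosedNbhd_s6.mpr ⟨hr, fun h => hxr (h ▸ rfl), fun hadj => ?_⟩, hrp, hne⟩
  rcases (adj_iff.mp hadj).2 with h | ⟨-, hr0, -⟩
  · exact hxr h
  · exact hne (ext_of_val hrp (hr0.trans hp0.symm))

lemma hasFibreMates_of_forall_snd_ne_zero {A : Finset (Σ i : Fin n, Fin (k i))}
    (hA : ∀ p ∈ A, p.2.val ≠ 0) : HasFibreMates G k A :=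
  fun p hp _ _ hp0 _ _ => absurd hp0 (hA p hp)

lemma HasFibreMates.vertexDecomposableOn {A : Finset (Σ i : Fin n, Fin (k i))}
    (hA : HasFibreMates G k A) : VertexDecomposableOn (appendCliques G k) A := by
  refine vertexDecomposableOn_of_invariant (HasFibreMates G k)
    (fun _ => HasFibreMates.wellCoveredOn) (fun A hA hne => ?_) hA
  by_cases horig : ∃ x ∈ A, x.2.val = 0
  · obtain ⟨x, hx, hx0⟩ := horig
    exact ⟨x, hx, hA.erase hx0, hA.delClosedNbhd x⟩
  · push Not at horig
    obtain ⟨x, hx⟩ := hne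
    exact ⟨x, hx,
      hasFibreMates_of_forall_snd_ne_zero fun p hp => horig p (Finset.mem_of_mem_erase hp),
      hasFibreMates_of_forall_snd_ne_zero fun p hp => horig p (mem_delClosedNbhd_s6.mp hp).1⟩

lemma hasFibreMates_univ (hk : ∀ i, 2 ≤ k i) : HasFibreMates G k Finset.univ := by
  intro p _ _ _ hp0 _ _
  refine ⟨⟨p.1, ⟨1, hk p.1⟩⟩, Finset.mem_univ _, rfl, fun h => ?_⟩
  rw [← h] at hp0
  exact one_ne_zero hp0

lemma isDominatingSet_original (hk : ∀ i, 1 ≤ k i) :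
    IsDominatingSet (appendCliques G k) {p | p.2.val = 0} := by
  intro v hv
  exact ⟨⟨v.1, ⟨0, hk v.1⟩⟩, rfl, adj_of_fst_eq (fun h => hv (h ▸ rfl)) rfl⟩

end appendCliques

/-- For any graph `G` and clique sizes `k i ≥ 2`, the set of original
vertices `{x_{i,1}}` is contained in `Shed(G̃)` and is a dominating set of `G̃`; in
particular `Shed(G̃)` is a dominating set of `G̃`. -/
theorem statement6 (n : ℕ) (G : SimpleGraph (Fin n)) (k : Fin n → ℕ)
    (hk : ∀ i, 2 ≤ k i) :
    (∀ p : Σ i : Fin n, Fin (k i), p.2.val = 0 → p ∈ Shed (appendCliques G k)) ∧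
    IsDominatingSet (appendCliques G k) {p : Σ i : Fin n, Fin (k i) | p.2.val = 0} ∧
    IsDominatingSet (appendCliques G k) (Shed (appendCliques G k)) := by
  have hshed : ∀ p : Σ i : Fin n, Fin (k i), p.2.val = 0 → p ∈ Shed (appendCliques G k) :=
    fun p hp0 => ⟨((appendCliques.hasFibreMates_univ hk).erase hp0).vertexDecomposableOn,
      ((appendCliques.hasFibreMates_univ hk).delClosedNbhd p).vertexDecomposableOn⟩
  have hdom :=
    appendCliques.isDominatingSet_original (G := G) fun i => (hk i).trans' one_le_two
  exact ⟨hshed, hdom, hdom.mono hshed⟩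
end
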